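/- arXiv:1305.1527 — 3 statements merged into one kernel-verified Lean document; each statement's English description precedes it below -/
import Mathlib

section
/- Let g : ℝ → ℝ be continuous and bounded, and let f_g(x) = e^{x²/2} ∫_{-∞}^x (g(y) − ∫ g dγ) e^{-y²/2} dy, where γ is the standard Gaussian measure on ℝ. Then f_g is continuously differentiable on ℝ and satisfies Stein's equation: f_g'(x) − x·f_g(x) = g(x) − ∫ g dγ for every x ∈ ℝ. -/
open MeasureTheory ProbabilityTheory Real

/-- The Stein solution associated with `g`:
`f_g(x) = e^{x²/2} ∫_{-∞}^x (g(y) − ∫ g dγ) e^{-y²/2} dy`,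
where `γ` is the standard Gaussian measure on `ℝ`. -/
noncomputable def steinSol (g : ℝ → ℝ) : ℝ → ℝ := fun x =>
  Real.exp (x ^ 2 / 2) *
    ∫ y in Set.Iic x, (g y - ∫ z, g z ∂(gaussianReal 0 1)) * Real.exp (-(y ^ 2) / 2)

/-! For `φ = g - ∫ g dγ`, continuous and bounded, `φ(y) e^{-y²/2}` is integrable, so by the
fundamental theorem of calculus `x ↦ ∫_{-∞}^x φ(y) e^{-y²/2} dy` has derivative `φ(x) e^{-x²/2}`.
The product rule then gives `f' = x f + φ`, which is continuous. -/

theorem hasDerivAt_integral_Iic {E : Type*} [NormedAddCommGroup E] [NormedSpace ℝ E]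
    [CompleteSpace E] {f : ℝ → E} (hf : Integrable f) {x : ℝ} (hx : ContinuousAt f x) :
    HasDerivAt (fun u => ∫ y in Set.Iic u, f y) (f x) x := by
  have hsplit : (fun u => ∫ y in Set.Iic u, f y) =
      fun u => (∫ y in Set.Iic 0, f y) + ∫ y in (0 : ℝ)..u, f y := by
    funext u
    rw [← intervalIntegral.integral_Iic_sub_Iic hf.integrableOn hf.integrableOn]
    abel
  rw [hsplit]
  exact (intervalIntegral.integral_hasDerivAt_right hf.intervalIntegrable
    hf.aestronglyMeasurable.stronglyMeasurableAtFilter hx).const_add _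

theorem integrable_mul_exp_neg_sq_div_two {φ : ℝ → ℝ} (hφ : AEStronglyMeasurable φ)
    {C : ℝ} (hC : ∀ y, |φ y| ≤ C) :
    Integrable fun y => φ y * exp (-(y ^ 2) / 2) := by
  have hgauss : Integrable fun y : ℝ => exp (-(y ^ 2) / 2) := by
    simpa [neg_div, div_eq_inv_mul] using integrable_exp_neg_mul_sq (b := 1 / 2) (by norm_num)
  exact hgauss.bdd_mul hφ (.of_forall hC)

theorem hasDerivAt_exp_mul_integral_Iic {φ : ℝ → ℝ} (hφ : Continuous φ) {C : ℝ}
    (hC : ∀ y, |φ y| ≤ C) (x : ℝ) :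
    HasDerivAt (fun u => exp (u ^ 2 / 2) * ∫ y in Set.Iic u, φ y * exp (-(y ^ 2) / 2))
      (x * (exp (x ^ 2 / 2) * ∫ y in Set.Iic x, φ y * exp (-(y ^ 2) / 2)) + φ x) x := by
  have hexp : HasDerivAt (fun u : ℝ => exp (u ^ 2 / 2)) (x * exp (x ^ 2 / 2)) x := by
    convert ((hasDerivAt_pow 2 x).div_const 2).exp using 1
    ring
  have hint := hasDerivAt_integral_Iic
    (integrable_mul_exp_neg_sq_div_two hφ.aestronglyMeasurable hC)
    (by fun_prop : Continuous fun y => φ y * exp (-(y ^ 2) / 2)).continuousAt (x := x)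
  have hcancel : exp (x ^ 2 / 2) * exp (-(x ^ 2) / 2) = 1 := by
    rw [← exp_add]; ring_nf; exact exp_zero
  exact (hexp.mul hint).congr_deriv (by linear_combination φ x * hcancel)

theorem hasDerivAt_steinSol {g : ℝ → ℝ} (hg : Continuous g) {C : ℝ} (hC : ∀ x, |g x| ≤ C)
    (x : ℝ) :
    HasDerivAt (steinSol g) (x * steinSol g x + (g x - ∫ z, g z ∂(gaussianReal 0 1))) x := by
  set c := ∫ z, g z ∂(gaussianReal 0 1)
  have hbound (y : ℝ) : |g y - c| ≤ C + |c| := (abs_sub _ _).trans (by gcongr; exact hC y)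
  exact hasDerivAt_exp_mul_integral_Iic (hg.sub continuous_const) hbound x

/-- If `g : ℝ → ℝ` is continuous and bounded, then `f_g` is continuously differentiable
and satisfies Stein's equation `f_g'(x) − x·f_g(x) = g(x) − ∫ g dγ` for every `x`. -/
theorem stmt_0 (g : ℝ → ℝ) (hg : Continuous g) (hgb : ∃ C, ∀ x, |g x| ≤ C) :
    ContDiff ℝ 1 (steinSol g) ∧
      ∀ x : ℝ, deriv (steinSol g) x - x * steinSol g x
        = g x - ∫ z, g z ∂(gaussianReal 0 1) := by
  obtain ⟨C, hC⟩ := hgb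
  have hderiv := hasDerivAt_steinSol hg hC
  have hdiff : Differentiable ℝ (steinSol g) := fun x => (hderiv x).differentiableAt
  have hderiv_eq : deriv (steinSol g) =
      fun x => x * steinSol g x + (g x - ∫ z, g z ∂(gaussianReal 0 1)) :=
    funext fun x => (hderiv x).deriv
  refine ⟨contDiff_one_iff_deriv.2 ⟨hdiff, ?_⟩, fun x => ?_⟩
  · rw [hderiv_eq]
    have := hdiff.continuous
    fun_prop
  · rw [hderiv_eq]
    ring
end

section
/- Let g : ℝ → ℝ be continuous and bounded, and let f_g(x) = e^{x²/2} ∫_{-∞}^x (g(y) − ∫ g dγ) e^{-y²/2} dy, where γ is the standard Gaussian measure on ℝ. Then for every x ∈ ℝ, |f_g(x)| ≤ √(π/2) · sup_{y ∈ ℝ} |g(y) − ∫ g dγ|. -/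
open MeasureTheory ProbabilityTheory Real

/-!
For `x ≤ 0`, `-y²/2 ≤ -x²/2 - (y - x)²/2` on `(-∞, x]`, so
`e^{x²/2} ∫_{-∞}^x e^{-y²/2} dy ≤ ∫_{-∞}^0 e^{-u²/2} du = √(π/2)` (a Mills-ratio bound).
For `x > 0`, the integrand `(g - ∫ g dγ) e^{-y²/2}` has total integral zero, so its integral over
`(-∞, x]` is minus the one over `(x, ∞)`, where the mirror-image bound applies.
-/

open Set

lemma exp_neg_sq_div_two_eq (y : ℝ) : exp (-(y ^ 2) / 2) = exp (-(1 / 2) * y ^ 2) := by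
  ring_nf

lemma integrable_exp_neg_sq_div_two : Integrable fun y : ℝ => exp (-(y ^ 2) / 2) := by
  simpa only [exp_neg_sq_div_two_eq] using integrable_exp_neg_mul_sq (b := 1 / 2) (by norm_num)

lemma integral_exp_neg_sq_div_two : ∫ y, exp (-(y ^ 2) / 2) = √(2 * π) := by
  simp only [exp_neg_sq_div_two_eq, integral_gaussian]
  congr 1
  ring

lemma integral_Iic_zero_exp_neg_sq_div_two : ∫ y in Iic 0, exp (-(y ^ 2) / 2) = √(π / 2) := by
  have h := integral_comp_neg_Iic 0 fun y : ℝ => exp (-(y ^ 2) / 2)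
  simp only [neg_sq, neg_zero] at h
  rw [h]
  simp only [exp_neg_sq_div_two_eq, integral_gaussian_Ioi]
  rw [show π / (1 / 2) = 2 ^ 2 * (π / 2) by ring, sqrt_mul (by positivity),
    sqrt_sq (by norm_num)]
  ring

lemma setIntegral_Iic_comp_sub_right {E : Type*} [NormedAddCommGroup E] [NormedSpace ℝ E]
    (f : ℝ → E) (x : ℝ) : ∫ y in Iic x, f (y - x) = ∫ y in Iic 0, f y := by
  have h := (measurePreserving_sub_right volume x).setIntegral_preimage_emb
    (measurableEmbedding_subRight x) f (Iic 0)
  rwa [show (· - x) ⁻¹' Iic (0 : ℝ) = Iic x by ext; simp] at h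

lemma integral_Iic_exp_neg_sq_div_two_le {x : ℝ} (hx : x ≤ 0) :
    ∫ y in Iic x, exp (-(y ^ 2) / 2) ≤ exp (-(x ^ 2) / 2) * √(π / 2) := by
  have hshift : IntegrableOn (fun y => exp (-(y - x) ^ 2 / 2)) (Iic x) := by
    simpa using (integrable_exp_neg_sq_div_two.comp_sub_right x).integrableOn
  calc ∫ y in Iic x, exp (-(y ^ 2) / 2)
      ≤ ∫ y in Iic x, exp (-(x ^ 2) / 2) * exp (-(y - x) ^ 2 / 2) := by
        refine setIntegral_mono_on integrable_exp_neg_sq_div_two.integrableOn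
          (hshift.const_mul _) measurableSet_Iic fun y (hy : y ≤ x) => ?_
        rw [← exp_add, exp_le_exp]
        nlinarith
    _ = exp (-(x ^ 2) / 2) * √(π / 2) := by
        rw [integral_const_mul, ← integral_Iic_zero_exp_neg_sq_div_two,
          ← setIntegral_Iic_comp_sub_right _ x]

lemma integral_Ioi_exp_neg_sq_div_two_le {x : ℝ} (hx : 0 ≤ x) :
    ∫ y in Ioi x, exp (-(y ^ 2) / 2) ≤ exp (-(x ^ 2) / 2) * √(π / 2) := by
  have h := integral_comp_neg_Ioi x fun y : ℝ => exp (-(y ^ 2) / 2)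
  simp only [neg_sq] at h
  rw [h]
  simpa only [neg_sq] using integral_Iic_exp_neg_sq_div_two_le (neg_nonpos.mpr hx)

lemma integral_gaussianReal_eq (g : ℝ → ℝ) :
    ∫ z, g z ∂(gaussianReal 0 1) = (√(2 * π))⁻¹ * ∫ y, g y * exp (-(y ^ 2) / 2) := by
  rw [integral_gaussianReal_eq_integral_smul one_ne_zero, ← integral_const_mul]
  congr 1 with y
  simp only [gaussianPDFReal, NNReal.coe_one, mul_one, sub_zero, smul_eq_mul]
  ring

lemma integral_sub_integral_gaussianReal_mul_exp_eq_zero {g : ℝ → ℝ}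
    (hg : Integrable fun y => g y * exp (-(y ^ 2) / 2)) :
    ∫ y, (g y - ∫ z, g z ∂(gaussianReal 0 1)) * exp (-(y ^ 2) / 2) = 0 := by
  simp only [sub_mul]
  rw [integral_sub hg (integrable_exp_neg_sq_div_two.const_mul _), integral_const_mul,
    integral_exp_neg_sq_div_two, integral_gaussianReal_eq]
  field_simp
  ring

lemma abs_setIntegral_mul_exp_neg_sq_div_two_le {φ : ℝ → ℝ} {M : ℝ} (hφ : ∀ y, |φ y| ≤ M)
    (s : Set ℝ) :
    |∫ y in s, φ y * exp (-(y ^ 2) / 2)| ≤ M * ∫ y in s, exp (-(y ^ 2) / 2) := by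
  rw [← integral_const_mul, ← Real.norm_eq_abs]
  refine norm_integral_le_of_norm_le (integrable_exp_neg_sq_div_two.integrableOn.const_mul M)
    (ae_of_all _ fun y => ?_)
  rw [norm_mul, norm_of_nonneg (exp_pos _).le]
  exact mul_le_mul_of_nonneg_right (hφ y) (exp_pos _).le

lemma abs_integral_Iic_mul_exp_neg_sq_div_two_le {φ : ℝ → ℝ} {M : ℝ}
    (hφm : AEStronglyMeasurable φ) (hφ : ∀ y, |φ y| ≤ M)
    (hφ0 : ∫ y, φ y * exp (-(y ^ 2) / 2) = 0) (x : ℝ) :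
    |∫ y in Iic x, φ y * exp (-(y ^ 2) / 2)| ≤ M * (exp (-(x ^ 2) / 2) * √(π / 2)) := by
  have hM : 0 ≤ M := (abs_nonneg _).trans (hφ 0)
  rcases le_total x 0 with hx | hx
  · exact (abs_setIntegral_mul_exp_neg_sq_div_two_le hφ _).trans
      (mul_le_mul_of_nonneg_left (integral_Iic_exp_neg_sq_div_two_le hx) hM)
  · have hint : Integrable fun y => φ y * exp (-(y ^ 2) / 2) :=
      integrable_exp_neg_sq_div_two.bdd_mul hφm (ae_of_all _ fun y => hφ y)
    have hsplit := intervalIntegral.integral_Iic_add_Ioi (b := x) hint.integrableOn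
      hint.integrableOn
    rw [hφ0, add_eq_zero_iff_eq_neg] at hsplit
    rw [hsplit, abs_neg]
    exact (abs_setIntegral_mul_exp_neg_sq_div_two_le hφ _).trans
      (mul_le_mul_of_nonneg_left (integral_Ioi_exp_neg_sq_div_two_le hx) hM)

/-- For continuous bounded `g`, one has `|f_g(x)| ≤ √(π/2) · sup_y |g(y) − ∫ g dγ|`. -/
theorem stmt_2 (g : ℝ → ℝ) (hg : Continuous g) (hgb : ∃ C, ∀ x, |g x| ≤ C) :
    ∀ x : ℝ, |steinSol g x|
      ≤ Real.sqrt (Real.pi / 2) * ⨆ y : ℝ, |g y - ∫ z, g z ∂(gaussianReal 0 1)| := by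
  obtain ⟨C, hC⟩ := hgb
  set c := ∫ z, g z ∂(gaussianReal 0 1)
  have hbdd : BddAbove (range fun y => |g y - c|) :=
    ⟨C + |c|, by rintro _ ⟨y, rfl⟩; exact (abs_sub _ _).trans (by linarith [hC y])⟩
  have hint : Integrable fun y => g y * exp (-(y ^ 2) / 2) :=
    integrable_exp_neg_sq_div_two.bdd_mul hg.aestronglyMeasurable (ae_of_all _ hC)
  intro x
  have key := abs_integral_Iic_mul_exp_neg_sq_div_two_le (φ := fun y => g y - c)
    (hg.sub continuous_const).aestronglyMeasurable (le_ciSup hbdd)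
    (integral_sub_integral_gaussianReal_mul_exp_eq_zero hint) x
  rw [steinSol, abs_mul, abs_of_pos (exp_pos _)]
  calc exp (x ^ 2 / 2) * |∫ y in Iic x, (g y - c) * exp (-(y ^ 2) / 2)|
      ≤ exp (x ^ 2 / 2) * ((⨆ y, |g y - c|) * (exp (-(x ^ 2) / 2) * √(π / 2))) :=
        mul_le_mul_of_nonneg_left key (exp_pos _).le
    _ = √(π / 2) * ⨆ y, |g y - c| := by
        have hexp : exp (x ^ 2 / 2) * exp (-(x ^ 2) / 2) = 1 := by
          rw [← exp_add, neg_div, add_neg_cancel, exp_zero]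
        linear_combination (√(π / 2) * ⨆ y, |g y - c|) * hexp
end

section
/- Let μ and ν be Borel probability measures on ℝ. Then sup over Borel sets A ⊆ ℝ of |μ(A) − ν(A)| equals one half of the supremum of |∫ g dμ − ∫ g dν| taken over all continuously differentiable functions g : ℝ → ℝ with compact support satisfying |g(x)| ≤ 1 for all x ∈ ℝ. -/
/-
Let `D` be a Hahn set for `μ - ν`: `ν ≤ μ` on `D` and `μ ≤ ν` off `D`. Splitting along `D` gives
`|μ A - ν A| ≤ μ D - ν D`, with equality at `A = D`, and, for `|g| ≤ 1`,
`|∫ g dμ - ∫ g dν| ≤ ∫ s dμ - ∫ s dν = 2 (μ D - ν D)`, where `s` is `1` on `D` and `-1` off `D`.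
Conversely, inner regularity of `μ + ν` gives compact sets `K ⊆ D` and `L ⊆ Dᶜ` carrying almost all
of its mass, and a smooth compactly supported `g` with `|g| ≤ 1`, equal to `1` on `K` and to `-1`
on `L`, approximates `s` in `L¹(μ + ν)`.
-/

open MeasureTheory Set
open scoped Manifold ContDiff

section SmoothSeparation

variable {E : Type*} [NormedAddCommGroup E] [NormedSpace ℝ E] [FiniteDimensional ℝ E]

theorem exists_contDiff_hasCompactSupport_eqOn_one_zero {K C : Set E} (hK : IsCompact K)
    (hC : IsClosed C) (hKC : Disjoint K C) :
    ∃ u : E → ℝ, ContDiff ℝ ∞ u ∧ HasCompactSupport u ∧ range u ⊆ Icc 0 1 ∧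
      EqOn u 1 K ∧ EqOn u 0 C := by
  set U := Cᶜ ∩ Metric.thickening 1 K
  have hU : IsOpen U := hC.isOpen_compl.inter Metric.isOpen_thickening
  have hKU : K ⊆ U :=
    subset_inter hKC.subset_compl_right (Metric.self_subset_thickening one_pos K)
  obtain ⟨u, hu, hrange, hsupp, hone⟩ :=
    exists_contMDiff_support_eq_eq_one_iff 𝓘(ℝ, E) (n := (⊤ : ℕ∞)) hU hK.isClosed hKU
  refine ⟨u, contMDiff_iff_contDiff.1 hu, ?_, hrange, fun x hx => (hone x).1 hx,
    fun x hx => Function.notMem_support.1 fun h => (hsupp ▸ h).1 hx⟩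
  rw [HasCompactSupport, tsupport, hsupp]
  exact (hK.isBounded.thickening.subset inter_subset_right).isCompact_closure

theorem exists_contDiff_hasCompactSupport_eqOn_one_neg_one {K L : Set E} (hK : IsCompact K)
    (hL : IsCompact L) (hKL : Disjoint K L) :
    ∃ g : E → ℝ, ContDiff ℝ ∞ g ∧ HasCompactSupport g ∧ (∀ x, |g x| ≤ 1) ∧
      EqOn g 1 K ∧ EqOn g (-1) L := by
  obtain ⟨u, hu, huK, hu01, hu1, hu0⟩ :=
    exists_contDiff_hasCompactSupport_eqOn_one_zero hK hL.isClosed hKL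
  obtain ⟨v, hv, hvK, hv01, hv1, hv0⟩ :=
    exists_contDiff_hasCompactSupport_eqOn_one_zero hL hK.isClosed hKL.symm
  refine ⟨u - v, hu.sub hv, huK.sub hvK, fun x => ?_, fun x hx => ?_, fun x hx => ?_⟩
  · have hux := hu01 (mem_range_self x)
    have hvx := hv01 (mem_range_self x)
    simp only [Pi.sub_apply, abs_le, mem_Icc] at hux hvx ⊢
    constructor <;> linarith
  · simp [hu1 hx, hv0 hx]
  · simp [hu0 hx, hv1 hx]

end SmoothSeparation

section SignIndicator

variable {α : Type*} {D : Set α}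

noncomputable def signIndicator (D : Set α) : α → ℝ :=
  fun x => D.indicator 1 x - Dᶜ.indicator 1 x

theorem signIndicator_of_mem {x : α} (hx : x ∈ D) : signIndicator D x = 1 := by
  simp [signIndicator, hx]

theorem signIndicator_of_notMem {x : α} (hx : x ∉ D) : signIndicator D x = -1 := by
  simp [signIndicator, hx]

theorem abs_signIndicator (x : α) : |signIndicator D x| = 1 := by
  by_cases hx : x ∈ D
  · simp [signIndicator_of_mem hx]
  · simp [signIndicator_of_notMem hx]

variable [MeasurableSpace α] {μ : Measure α}

theorem integrable_signIndicator [IsFiniteMeasure μ] (hD : MeasurableSet D) :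
    Integrable (signIndicator D) μ :=
  ((integrable_const 1).indicator hD).sub ((integrable_const 1).indicator hD.compl)

theorem integral_signIndicator [IsFiniteMeasure μ] (hD : MeasurableSet D) :
    ∫ x, signIndicator D x ∂μ = μ.real D - μ.real Dᶜ := by
  simp only [signIndicator]
  rw [integral_sub ((integrable_const 1).indicator hD)
    ((integrable_const 1).indicator hD.compl), integral_indicator_one hD,
    integral_indicator_one hD.compl]

end SignIndicator

section Approximation

variable {E : Type*} [NormedAddCommGroup E] [NormedSpace ℝ E] [FiniteDimensional ℝ E]
  [MeasurableSpace E] [BorelSpace E]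

theorem exists_contDiff_integral_abs_sub_signIndicator_le (ρ : Measure E) [IsFiniteMeasure ρ]
    {D : Set E} (hD : MeasurableSet D) {ε : ℝ} (hε : 0 < ε) :
    ∃ g : E → ℝ, ContDiff ℝ ∞ g ∧ HasCompactSupport g ∧ (∀ x, |g x| ≤ 1) ∧
      ∫ x, |g x - signIndicator D x| ∂ρ ≤ ε := by
  have hε4 : ENNReal.ofReal (ε / 4) ≠ 0 := by positivity
  obtain ⟨K, hKD, hK, hDK⟩ := hD.exists_isCompact_sdiff_lt (measure_ne_top ρ D) hε4
  obtain ⟨L, hLD, hL, hDL⟩ := hD.compl.exists_isCompact_sdiff_lt (measure_ne_top ρ Dᶜ) hε4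
  obtain ⟨g, hg, hgc, hg1, hgK, hgL⟩ := exists_contDiff_hasCompactSupport_eqOn_one_neg_one hK hL
    (disjoint_compl_right.mono hKD hLD)
  refine ⟨g, hg, hgc, hg1, ?_⟩
  have hagree : ∀ x ∉ (K ∪ L)ᶜ, |g x - signIndicator D x| = 0 := by
    intro x hx
    rcases notMem_compl_iff.1 hx with hxK | hxL
    · simp [hgK hxK, signIndicator_of_mem (hKD hxK)]
    · simp [hgL hxL, signIndicator_of_notMem (hLD hxL)]
  have herror : (K ∪ L)ᶜ ⊆ (D \ K) ∪ (Dᶜ \ L) := by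
    intro x hx
    by_cases hxD : x ∈ D
    · exact Or.inl ⟨hxD, fun h => hx (Or.inl h)⟩
    · exact Or.inr ⟨hxD, fun h => hx (Or.inr h)⟩
  calc ∫ x, |g x - signIndicator D x| ∂ρ
      = ∫ x in (K ∪ L)ᶜ, |g x - signIndicator D x| ∂ρ :=
        (setIntegral_eq_integral_of_forall_compl_eq_zero hagree).symm
    _ ≤ 2 * ρ.real (K ∪ L)ᶜ := by
        refine (le_abs_self _).trans ?_
        rw [← Real.norm_eq_abs]
        refine norm_setIntegral_le_of_norm_le_const (measure_lt_top ρ _) fun x _ => ?_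
        rw [Real.norm_eq_abs, abs_abs]
        linarith [abs_sub (g x) (signIndicator D x), hg1 x, abs_signIndicator (D := D) x]
    _ ≤ 2 * (ρ.real (D \ K) + ρ.real (Dᶜ \ L)) := by
        gcongr
        exact (measureReal_mono herror).trans (measureReal_union_le _ _)
    _ ≤ 2 * (ε / 4 + ε / 4) := by
        gcongr
        · exact ENNReal.toReal_le_of_le_ofReal (by positivity) hDK.le
        · exact ENNReal.toReal_le_of_le_ofReal (by positivity) hDL.le
    _ = ε := by ring

theorem exists_contDiff_integral_sub_integral_ge (μ ν : Measure E) [IsFiniteMeasure μ]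
    [IsFiniteMeasure ν] {D : Set E} (hD : MeasurableSet D) {ε : ℝ} (hε : 0 < ε) :
    ∃ g : E → ℝ, ContDiff ℝ ∞ g ∧ HasCompactSupport g ∧ (∀ x, |g x| ≤ 1) ∧
      ∫ x, signIndicator D x ∂μ - ∫ x, signIndicator D x ∂ν - ε ≤
        ∫ x, g x ∂μ - ∫ x, g x ∂ν := by
  obtain ⟨g, hg, hgc, hg1, hgD⟩ :=
    exists_contDiff_integral_abs_sub_signIndicator_le (μ + ν) hD hε
  refine ⟨g, hg, hgc, hg1, ?_⟩
  have hgi : ∀ (ρ : Measure E) [IsFiniteMeasure ρ], Integrable g ρ := fun _ _ =>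
    hg.continuous.integrable_of_hasCompactSupport hgc
  have hdiff : ∀ (ρ : Measure E) [IsFiniteMeasure ρ],
      |∫ x, g x ∂ρ - ∫ x, signIndicator D x ∂ρ| ≤ ∫ x, |g x - signIndicator D x| ∂ρ :=
    fun ρ _ => by
      rw [← integral_sub (hgi ρ) (integrable_signIndicator hD)]
      exact abs_integral_le_integral_abs
  rw [integral_add_measure (f := fun x => |g x - signIndicator D x|)
    ((hgi μ).sub (integrable_signIndicator hD)).abs
    ((hgi ν).sub (integrable_signIndicator hD)).abs] at hgD
  have hμ := hdiff μ
  have hν := hdiff ν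
  rw [abs_le] at hμ hν
  linarith

end Approximation

namespace MeasureTheory

section

variable {α : Type*} [MeasurableSpace α] {μ ν : Measure α} {D : Set α}

theorem IsHahnDecomposition.measureReal_le_of_subset [IsFiniteMeasure ν]
    (hD : IsHahnDecomposition μ ν D) {A : Set α} (hA : A ⊆ D) : μ.real A ≤ ν.real A := by
  have h := Measure.le_iff'.1 hD.le_on A
  rw [Measure.restrict_apply' hD.measurableSet, Measure.restrict_apply' hD.measurableSet,
    inter_eq_left.2 hA] at h
  exact ENNReal.toReal_mono (measure_ne_top ν A) h

theorem IsHahnDecomposition.measureReal_sub_le [IsFiniteMeasure μ] [IsFiniteMeasure ν]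
    (hD : IsHahnDecomposition ν μ D) {A : Set α} (hA : MeasurableSet A) :
    μ.real A - ν.real A ≤ μ.real D - ν.real D := by
  -- `μ - ν` is nonnegative on `A ∩ D` and `D \ A`, and nonpositive on `A \ D`.
  have hAD := hD.measureReal_le_of_subset (inter_subset_right : A ∩ D ⊆ D)
  have hDA := hD.measureReal_le_of_subset (sdiff_subset : D \ A ⊆ D)
  have hAD' := hD.compl.measureReal_le_of_subset (fun x hx => hx.2 : A \ D ⊆ Dᶜ)
  have hμA := measureReal_inter_add_sdiff (μ := μ) (s := A) hD.measurableSet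
  have hνA := measureReal_inter_add_sdiff (μ := ν) (s := A) hD.measurableSet
  have hμD := measureReal_inter_add_sdiff (μ := μ) (s := D) hA
  have hνD := measureReal_inter_add_sdiff (μ := ν) (s := D) hA
  rw [inter_comm] at hμD hνD
  linarith

theorem abs_integral_sub_integral_le_of_le [IsFiniteMeasure μ] (hνμ : ν ≤ μ) {g : α → ℝ}
    (hg : Integrable g μ) (hg1 : ∀ x, |g x| ≤ 1) :
    |∫ x, g x ∂μ - ∫ x, g x ∂ν| ≤ μ.real univ - ν.real univ := by
  have := isFiniteMeasure_of_le μ hνμ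
  have hsplit : ∫ x, g x ∂μ - ∫ x, g x ∂ν = ∫ x, g x ∂(μ - ν) := by
    conv_lhs => rw [← Measure.sub_add_cancel_of_le hνμ]
    rw [integral_add_measure (hg.mono_measure Measure.sub_le) (hg.mono_measure hνμ),
      add_sub_cancel_right]
  have hmass : (μ - ν).real univ = μ.real univ - ν.real univ := by
    rw [measureReal_def, Measure.sub_apply MeasurableSet.univ hνμ,
      ENNReal.toReal_sub_of_le (hνμ univ) (measure_ne_top μ univ), measureReal_def,
      measureReal_def]
  rw [hsplit, ← hmass, ← Real.norm_eq_abs, ← one_mul ((μ - ν).real univ)]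
  exact norm_integral_le_of_norm_le_const (.of_forall fun x => hg1 x)

theorem IsHahnDecomposition.abs_integral_sub_integral_le [IsFiniteMeasure μ]
    [IsFiniteMeasure ν] (hD : IsHahnDecomposition ν μ D) {g : α → ℝ} (hgμ : Integrable g μ)
    (hgν : Integrable g ν) (hg1 : ∀ x, |g x| ≤ 1) :
    |∫ x, g x ∂μ - ∫ x, g x ∂ν| ≤ ∫ x, signIndicator D x ∂μ - ∫ x, signIndicator D x ∂ν := by
  have hDm := hD.measurableSet
  have hin := abs_integral_sub_integral_le_of_le hD.le_on hgμ.restrict hg1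
  have hout := abs_integral_sub_integral_le_of_le hD.ge_on_compl hgν.restrict hg1
  rw [measureReal_restrict_apply_univ, measureReal_restrict_apply_univ] at hin hout
  rw [← integral_add_compl hDm hgμ, ← integral_add_compl hDm hgν,
    integral_signIndicator hDm, integral_signIndicator hDm]
  rw [abs_le] at hin hout ⊢
  constructor <;> linarith

section Probability

variable [IsProbabilityMeasure μ] [IsProbabilityMeasure ν]

theorem IsHahnDecomposition.sSup_abs_measureReal_sub_eq (hD : IsHahnDecomposition ν μ D) :
    sSup {r : ℝ | ∃ A : Set α, MeasurableSet A ∧ r = |(μ A).toReal - (ν A).toReal|} =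
      μ.real D - ν.real D := by
  refine IsGreatest.csSup_eq ⟨⟨D, hD.measurableSet, ?_⟩, ?_⟩
  · exact (abs_of_nonneg (sub_nonneg.2 (hD.measureReal_le_of_subset subset_rfl))).symm
  · rintro _ ⟨A, hA, rfl⟩
    rw [← measureReal_def, ← measureReal_def]
    have hνμ := hD.compl.measureReal_sub_le hA
    rw [probReal_compl_eq_one_sub hD.measurableSet,
      probReal_compl_eq_one_sub hD.measurableSet] at hνμ
    exact abs_sub_le_iff.2 ⟨hD.measureReal_sub_le hA, by linarith⟩

theorem integral_signIndicator_sub_integral_signIndicator (hD : MeasurableSet D) :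
    ∫ x, signIndicator D x ∂μ - ∫ x, signIndicator D x ∂ν = 2 * (μ.real D - ν.real D) := by
  rw [integral_signIndicator hD, integral_signIndicator hD, probReal_compl_eq_one_sub hD,
    probReal_compl_eq_one_sub hD]
  ring

end Probability

end

section

variable {E : Type*} [NormedAddCommGroup E] [NormedSpace ℝ E] [FiniteDimensional ℝ E]
  [MeasurableSpace E] [BorelSpace E] {μ ν : Measure E} [IsProbabilityMeasure μ]
  [IsProbabilityMeasure ν] {D : Set E}

theorem IsHahnDecomposition.sSup_abs_integral_sub_eq (hD : IsHahnDecomposition ν μ D)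
    {n : WithTop ℕ∞} (hn : n ≤ ∞) :
    sSup {r : ℝ | ∃ g : E → ℝ, ContDiff ℝ n g ∧ HasCompactSupport g ∧
      (∀ x : E, |g x| ≤ 1) ∧ r = |(∫ x, g x ∂μ) - ∫ x, g x ∂ν|} = 2 * (μ.real D - ν.real D) := by
  rw [← integral_signIndicator_sub_integral_signIndicator hD.measurableSet]
  refine csSup_eq_of_forall_le_of_forall_lt_exists_gt
    ⟨0, 0, contDiff_const, HasCompactSupport.zero, by simp, by simp⟩ ?_ fun w hw => ?_
  · rintro _ ⟨g, hg, hgc, hg1, rfl⟩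
    have hgi : ∀ (ρ : Measure E) [IsFiniteMeasure ρ], Integrable g ρ := fun _ _ =>
      hg.continuous.integrable_of_hasCompactSupport hgc
    exact hD.abs_integral_sub_integral_le (hgi μ) (hgi ν) hg1
  · obtain ⟨g, hg, hgc, hg1, hgD⟩ :=
      exists_contDiff_integral_sub_integral_ge μ ν hD.measurableSet (half_pos (sub_pos.2 hw))
    exact ⟨_, ⟨g, hg.of_le hn, hgc, hg1, rfl⟩,
      by linarith [le_abs_self (∫ x, g x ∂μ - ∫ x, g x ∂ν)]⟩

end

end MeasureTheory

/-- The total variation distance `sup_A |μ(A) − ν(A)|` between two Borel probability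
measures on `ℝ` equals one half of the supremum of `|∫ g dμ − ∫ g dν|` over all
continuously differentiable `g : ℝ → ℝ` with compact support and `|g| ≤ 1`. -/
theorem stmt_5 (μ ν : Measure ℝ) [IsProbabilityMeasure μ] [IsProbabilityMeasure ν] :
    sSup {r : ℝ | ∃ A : Set ℝ, MeasurableSet A ∧ r = |(μ A).toReal - (ν A).toReal|}
      = (1 / 2) * sSup {r : ℝ | ∃ g : ℝ → ℝ, ContDiff ℝ 1 g ∧ HasCompactSupport g ∧
          (∀ x : ℝ, |g x| ≤ 1) ∧ r = |(∫ x, g x ∂μ) - ∫ x, g x ∂ν|} := by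
  obtain ⟨D, hD⟩ := exists_isHahnDecomposition ν μ
  rw [hD.sSup_abs_measureReal_sub_eq, hD.sSup_abs_integral_sub_eq (by norm_num)]
  ring
end
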